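/- Let D_y be a real k×m matrix and D_x a real l×n matrix, let B_y be a real m×p matrix with orthonormal columns (B_yᵀ B_y = I_p) and B_x a real n×q matrix with orthonormal columns (B_xᵀ B_x = I_q), and let G_y be k×n and G_x be m×l real matrices. Define the spectral-regularization cost ε(C) = ‖B_y C B_xᵀ D_xᵀ − G_x‖_F² + ‖D_y B_y C B_xᵀ − G_y‖_F² for C a real p×q matrix. Then C minimizes ε if and only if C satisfies the p×q Sylvester equation (B_yᵀ D_yᵀ D_y B_y) C + C (B_xᵀ D_xᵀ D_x B_x) = B_yᵀ (D_yᵀ G_y + G_x D_x) B_x. -/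

import Mathlib

/-!
Both terms of the cost are least-squares terms `‖P C Q - G‖²`, so the cost has an exact
quadratic expansion `ε (C + H) = ε C + 2 tr (∇ Hᵀ) + q H` with `q ≥ 0` homogeneous of degree
two and gradient `∇ = Σ Pᵀ (P C Q - G) Qᵀ`. Orthonormality (`Byᵀ By = 1`, `Bxᵀ Bx = 1`) turns
`∇` into the difference of the two sides of the Sylvester equation. With such an expansion,
`C` is a minimizer exactly when `∇ = 0`: sufficiency because `q ≥ 0`, necessity by a short
step along `-∇`.
-/

open Matrix

noncomputable def frobSq {a b : Type*} [Fintype a] [Fintype b]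
    (M : Matrix a b ℝ) : ℝ := ∑ i, ∑ j, (M i j) ^ 2

section Frobenius

variable {ι κ : Type*} [Fintype ι] [Fintype κ]

lemma frobSq_eq_trace_mul_transpose (M : Matrix ι κ ℝ) : frobSq M = (M * Mᵀ).trace := by
  simp [frobSq, Matrix.trace, Matrix.mul_apply, sq]

lemma frobSq_nonneg (M : Matrix ι κ ℝ) : 0 ≤ frobSq M := by
  unfold frobSq; positivity

lemma frobSq_smul (t : ℝ) (M : Matrix ι κ ℝ) : frobSq (t • M) = t ^ 2 * frobSq M := by
  simp [frobSq, Finset.mul_sum, mul_pow]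

lemma frobSq_add (X Y : Matrix ι κ ℝ) :
    frobSq (X + Y) = frobSq X + 2 * (X * Yᵀ).trace + frobSq Y := by
  have hsymm : (Y * Xᵀ).trace = (X * Yᵀ).trace := by
    rw [← trace_transpose, transpose_mul, transpose_transpose]
  simp only [frobSq_eq_trace_mul_transpose, transpose_add, Matrix.add_mul, Matrix.mul_add,
    trace_add, hsymm]
  ring

lemma trace_mul_transpose_mul_mul {α β γ δ : Type*} [Fintype α] [Fintype β] [Fintype γ]
    [Fintype δ] (X : Matrix α δ ℝ) (P : Matrix α β ℝ) (H : Matrix β γ ℝ) (Q : Matrix γ δ ℝ) :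
    (X * (P * H * Q)ᵀ).trace = (Pᵀ * X * Qᵀ * Hᵀ).trace := by
  simp only [transpose_mul, ← Matrix.mul_assoc]
  rw [trace_mul_comm, ← Matrix.mul_assoc, ← Matrix.mul_assoc]

lemma frobSq_mul_add_mul_sub {α β γ δ : Type*} [Fintype α] [Fintype β] [Fintype γ]
    [Fintype δ] (P : Matrix α β ℝ) (Q : Matrix γ δ ℝ) (G : Matrix α δ ℝ)
    (C H : Matrix β γ ℝ) :
    frobSq (P * (C + H) * Q - G) =
      frobSq (P * C * Q - G) + 2 * (Pᵀ * (P * C * Q - G) * Qᵀ * Hᵀ).trace + frobSq (P * H * Q) := by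
  rw [← trace_mul_transpose_mul_mul, ← frobSq_add, Matrix.mul_add, Matrix.add_mul]
  abel_nf

lemma forall_le_iff_eq_zero_of_quadratic_expansion (f : Matrix ι κ ℝ → ℝ) (C G : Matrix ι κ ℝ)
    (q : Matrix ι κ ℝ → ℝ) (hq : ∀ H, 0 ≤ q H) (hq_smul : ∀ (t : ℝ) H, q (t • H) = t ^ 2 * q H)
    (hf : ∀ H, f (C + H) = f C + 2 * (G * Hᵀ).trace + q H) :
    (∀ C', f C ≤ f C') ↔ G = 0 := by
  constructor
  · intro hmin
    -- the step `-t • G` against the gradient lowers `f` by `2 t ‖G‖²`, up to `t² q G`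
    have descent : ∀ t : ℝ, 2 * t * frobSq G ≤ t ^ 2 * q G := by
      intro t
      have := hmin (C + (-t) • G)
      rw [hf, hq_smul, transpose_smul, Matrix.mul_smul, trace_smul, smul_eq_mul,
        ← frobSq_eq_trace_mul_transpose] at this
      nlinarith
    have hS : frobSq G ≤ 0 := by
      by_contra! hpos
      have hq1 : 0 < q G + 1 := by linarith [hq G]
      have := descent (frobSq G / (q G + 1))
      field_simp at this
      nlinarith [hq G]
    rw [← trace_mul_conjTranspose_self_eq_zero_iff, conjTranspose_eq_transpose_of_trivial,
      ← frobSq_eq_trace_mul_transpose]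
    exact le_antisymm hS (frobSq_nonneg G)
  · rintro rfl C'
    have hC' := hf (C' - C)
    rw [add_sub_cancel, Matrix.zero_mul, trace_zero, mul_zero, add_zero] at hC'
    linarith [hq (C' - C)]

end Frobenius

/-- Spectral regularization: with orthonormal basis matrices `By`, `Bx`, the
coefficient matrix `C` minimizes
`ε(C) = ‖By C Bxᵀ Dxᵀ − Gx‖_F² + ‖Dy By C Bxᵀ − Gy‖_F²` iff it satisfies the
`p×q` Sylvester equation
`(Byᵀ Dyᵀ Dy By) C + C (Bxᵀ Dxᵀ Dx Bx) = Byᵀ (Dyᵀ Gy + Gx Dx) Bx`. -/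
theorem spectral_minimizer_iff_sylvester {k l m n p q : ℕ}
    (Dy : Matrix (Fin k) (Fin m) ℝ) (Dx : Matrix (Fin l) (Fin n) ℝ)
    (By : Matrix (Fin m) (Fin p) ℝ) (Bx : Matrix (Fin n) (Fin q) ℝ)
    (hBy : Byᵀ * By = 1) (hBx : Bxᵀ * Bx = 1)
    (Gy : Matrix (Fin k) (Fin n) ℝ) (Gx : Matrix (Fin m) (Fin l) ℝ)
    (ε : Matrix (Fin p) (Fin q) ℝ → ℝ)
    (hε : ∀ C, ε C = frobSq (By * C * Bxᵀ * Dxᵀ - Gx) + frobSq (Dy * (By * C * Bxᵀ) - Gy))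
    (C : Matrix (Fin p) (Fin q) ℝ) :
    (∀ C' : Matrix (Fin p) (Fin q) ℝ, ε C ≤ ε C') ↔
      (Byᵀ * Dyᵀ * Dy * By) * C + C * (Bxᵀ * Dxᵀ * Dx * Bx) =
        Byᵀ * (Dyᵀ * Gy + Gx * Dx) * Bx := by
  have hε_assoc : ∀ C, ε C = frobSq (By * C * (Bxᵀ * Dxᵀ) - Gx) + frobSq (Dy * By * C * Bxᵀ - Gy) := by
    intro C
    simp only [hε, Matrix.mul_assoc]
  have gradient : Byᵀ * (By * C * (Bxᵀ * Dxᵀ) - Gx) * (Bxᵀ * Dxᵀ)ᵀ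
      + (Dy * By)ᵀ * (Dy * By * C * Bxᵀ - Gy) * Bxᵀᵀ
      = (Byᵀ * Dyᵀ * Dy * By) * C + C * (Bxᵀ * Dxᵀ * Dx * Bx) - Byᵀ * (Dyᵀ * Gy + Gx * Dx) * Bx := by
    simp only [transpose_mul, transpose_transpose, Matrix.mul_sub, Matrix.sub_mul, Matrix.mul_add,
      Matrix.add_mul, Matrix.mul_assoc]
    rw [← Matrix.mul_assoc Byᵀ By, hBy, hBx]
    simp only [Matrix.one_mul, Matrix.mul_one]
    abel
  rw [← sub_eq_zero]
  refine forall_le_iff_eq_zero_of_quadratic_expansion ε C _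
    (fun H => frobSq (By * H * (Bxᵀ * Dxᵀ)) + frobSq (Dy * By * H * Bxᵀ))
    (fun H => add_nonneg (frobSq_nonneg _) (frobSq_nonneg _)) (fun t H => ?_) (fun H => ?_)
  · simp only [Matrix.mul_smul, Matrix.smul_mul, frobSq_smul]
    ring
  · rw [hε_assoc, hε_assoc, frobSq_mul_add_mul_sub, frobSq_mul_add_mul_sub, ← gradient, Matrix.add_mul,
      trace_add]
    ring
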